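/- arXiv:2109.09474 — 3 statements merged into one kernel-verified Lean document; each statement's English description precedes it below -/
import Mathlib

section
/- Let σ > 0. The function g(t) = t · Σ_{k=0}^{∞} e^{-k²t²/(2σ²)} is convex on the interval (0, ∞). -/
open Real


lemma sumS1 {ε : ℝ} (hε : 0 < ε) : Summable fun k : ℕ => Real.exp (-(ε * (k:ℝ)^2)) := by
  have hr : Real.exp (-ε) < 1 := by rwa [Real.exp_lt_one_iff, neg_lt_zero]
  refine Summable.of_nonneg_of_le (fun k => (Real.exp_nonneg _)) (fun k => ?_)
    (summable_geometric_of_lt_one (Real.exp_nonneg _) hr)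
  rw [← Real.exp_nat_mul]
  apply Real.exp_le_exp.2
  have hk : (k:ℝ) ≤ (k:ℝ)^2 := by
    rcases Nat.eq_zero_or_pos k with h | h
    · simp [h]
    · have : (1:ℝ) ≤ (k:ℝ) := by exact_mod_cast h
      nlinarith
  nlinarith

lemma sumS2 {ε : ℝ} (hε : 0 < ε) :
    Summable fun k : ℕ => (k:ℝ)^2 * Real.exp (-(ε * (k:ℝ)^2)) := by
  have hr : ‖Real.exp (-ε)‖ < 1 := by
    rw [Real.norm_eq_abs, abs_of_nonneg (Real.exp_nonneg _), Real.exp_lt_one_iff]; linarith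
  refine Summable.of_nonneg_of_le (fun k => by positivity) (fun k => ?_)
    (summable_pow_mul_geometric_of_norm_lt_one 2 hr)
  have h1 : Real.exp (-(ε * (k:ℝ)^2)) ≤ Real.exp (-ε) ^ k := by
    rw [← Real.exp_nat_mul]
    apply Real.exp_le_exp.2
    have hk : (k:ℝ) ≤ (k:ℝ)^2 := by
      rcases Nat.eq_zero_or_pos k with h | h
      · simp [h]
      · have : (1:ℝ) ≤ (k:ℝ) := by exact_mod_cast h
        nlinarith
    nlinarith
  exact mul_le_mul_of_nonneg_left h1 (by positivity)

lemma sumZ1 {ε : ℝ} (hε : 0 < ε) : Summable fun n : ℤ => Real.exp (-(ε * (n:ℝ)^2)) := by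
  apply Summable.of_nat_of_neg <;>
    · apply (sumS1 hε).congr
      intro k; push_cast; ring_nf

lemma sumZ2 {ε : ℝ} (hε : 0 < ε) :
    Summable fun n : ℤ => (n:ℝ)^2 * Real.exp (-(ε * (n:ℝ)^2)) := by
  apply Summable.of_nat_of_neg <;>
    · apply (sumS2 hε).congr
      intro k; push_cast; ring_nf


lemma phi_hasDeriv (w : ℝ) :
    HasDerivAt (fun w : ℝ => (1 - 2*w) * Real.exp (-w)) ((2*w - 3) * Real.exp (-w)) w := by
  have h1 : HasDerivAt (fun w : ℝ => 1 - 2*w) (-2) w := by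
    simpa using ((hasDerivAt_id w).const_mul 2).const_sub 1
  have h2 : HasDerivAt (fun w : ℝ => Real.exp (-w)) (-Real.exp (-w)) w := by
    simpa using ((hasDerivAt_id w).neg).exp
  exact (h1.mul h2).congr_deriv (by ring)

lemma phi_mono : MonotoneOn (fun w : ℝ => (1 - 2*w) * Real.exp (-w)) (Set.Ici (3/2 : ℝ)) := by
  apply monotoneOn_of_deriv_nonneg (convex_Ici _)
  · exact Continuous.continuousOn (by continuity)
  · intro x _; exact (phi_hasDeriv x).differentiableAt.differentiableWithinAt
  · intro x hx
    rw [interior_Ici] at hx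
    rw [(phi_hasDeriv x).deriv]
    have : (0:ℝ) ≤ 2*x - 3 := by simp only [Set.mem_Ioi] at hx; linarith
    positivity

lemma psi_anti : AntitoneOn (fun w : ℝ => w * Real.sqrt w * Real.exp (-w)) (Set.Ici (3/2 : ℝ)) := by
  have key : ∀ w : ℝ, 0 < w → HasDerivAt (fun w : ℝ => w * Real.sqrt w * Real.exp (-w))
      (((Real.sqrt w + w * (1/(2*Real.sqrt w))) + (w * Real.sqrt w) * (-1)) * Real.exp (-w)) w := by
    intro w hw
    have h1 : HasDerivAt (fun w : ℝ => w * Real.sqrt w) (1 * Real.sqrt w + w * (1/(2*Real.sqrt w))) w :=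
      (hasDerivAt_id w).mul (Real.hasDerivAt_sqrt hw.ne')
    have h2 : HasDerivAt (fun w : ℝ => Real.exp (-w)) (-Real.exp (-w)) w := by
      simpa using ((hasDerivAt_id w).neg).exp
    exact (h1.mul h2).congr_deriv (by ring)
  apply antitoneOn_of_deriv_nonpos (convex_Ici _)
  · exact Continuous.continuousOn (by continuity)
  · intro x hx
    rw [interior_Ici] at hx
    have hx0 : (0:ℝ) < x := by simp only [Set.mem_Ioi] at hx; linarith
    exact (key x hx0).differentiableAt.differentiableWithinAt
  · intro x hx
    rw [interior_Ici] at hx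
    simp only [Set.mem_Ioi] at hx
    have hx0 : (0:ℝ) < x := by linarith
    rw [(key x hx0).deriv]
    have hs : Real.sqrt x ^ 2 = x := Real.sq_sqrt hx0.le
    have hsp : 0 < Real.sqrt x := Real.sqrt_pos.2 hx0
    have hdiv : x * (1/(2*Real.sqrt x)) = Real.sqrt x / 2 := by
      field_simp; rw [hs]
    rw [hdiv]
    have he : 0 < Real.exp (-x) := Real.exp_pos _
    nlinarith [mul_pos hsp he]

lemma term_hasDeriv (σ : ℝ) (hσ : 0 < σ) (k : ℕ) (y : ℝ) :
    HasDerivAt (fun y : ℝ => y * Real.exp (-((k:ℝ)^2 * y^2)/(2*σ^2)))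
      ((1 - (k:ℝ)^2*y^2/σ^2) * Real.exp (-((k:ℝ)^2 * y^2)/(2*σ^2))) y := by
  have h1 : HasDerivAt (fun y : ℝ => -((k:ℝ)^2 * y^2)/(2*σ^2))
      (-((k:ℝ)^2*(2*y))/(2*σ^2)) y := by
    have := (((hasDerivAt_pow 2 y).const_mul ((k:ℝ)^2)).neg).div_const (2*σ^2)
    simpa using this
  have hexp := h1.exp
  refine ((hasDerivAt_id y).mul hexp).congr_deriv ?_
  simp only [id]
  field_simp
  ring

lemma deriv_orig (σ : ℝ) (hσ : 0 < σ) (t : ℝ) (ht : 0 < t) :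
    HasDerivAt (fun y : ℝ => y * ∑' k : ℕ, Real.exp (-((k:ℝ)^2 * y^2)/(2*σ^2)))
      (∑' k : ℕ, (1 - (k:ℝ)^2*t^2/σ^2) * Real.exp (-((k:ℝ)^2 * t^2)/(2*σ^2))) t := by
  have hfun : (fun y : ℝ => y * ∑' k : ℕ, Real.exp (-((k:ℝ)^2 * y^2)/(2*σ^2)))
      = fun y : ℝ => ∑' k : ℕ, y * Real.exp (-((k:ℝ)^2 * y^2)/(2*σ^2)) := by
    funext y; rw [tsum_mul_left]
  rw [hfun]
  have hε : 0 < (t/2)^2/(2*σ^2) := by positivity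
  have htmem : t ∈ Set.Ioo (t/2) (t+1) := Set.mem_Ioo.2 ⟨by linarith, by linarith⟩
  refine hasDerivAt_tsum_of_isPreconnected
    (u := fun k : ℕ => Real.exp (-((t/2)^2/(2*σ^2) * (k:ℝ)^2))
        + ((1+t)^2/σ^2) * ((k:ℝ)^2 * Real.exp (-((t/2)^2/(2*σ^2) * (k:ℝ)^2))))
    ((sumS1 hε).add ((sumS2 hε).mul_left _)) isOpen_Ioo (convex_Ioo _ _).isPreconnected
    (fun k y _ => term_hasDeriv σ hσ k y) ?_ htmem ?_ htmem
  · intro k y hy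
    obtain ⟨hy1, hy2⟩ := hy
    have hy0 : 0 < y := lt_trans (by linarith) hy1
    rw [Real.norm_eq_abs, abs_mul, abs_of_nonneg (Real.exp_nonneg _)]
    have e1 : Real.exp (-((k:ℝ)^2 * y^2)/(2*σ^2)) ≤ Real.exp (-((t/2)^2/(2*σ^2) * (k:ℝ)^2)) := by
      apply Real.exp_le_exp.2
      have hsq : (t/2)^2 ≤ y^2 := by nlinarith [mul_pos (sub_pos.2 hy1) (show 0 < y + t/2 by linarith)]
      have h2 : (t/2)^2*(k:ℝ)^2 ≤ (k:ℝ)^2*y^2 := by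
        nlinarith [mul_nonneg (sq_nonneg (k:ℝ)) (sub_nonneg.2 hsq)]
      rw [show -((t/2)^2/(2*σ^2) * (k:ℝ)^2) = -((t/2)^2*(k:ℝ)^2)/(2*σ^2) by ring]
      rw [div_le_div_iff_of_pos_right (by positivity)]
      linarith
    have hw0 : 0 ≤ (k:ℝ)^2*y^2/σ^2 := by positivity
    have hw1 : (k:ℝ)^2*y^2/σ^2 ≤ (1+t)^2/σ^2*(k:ℝ)^2 := by
      rw [show (1+t)^2/σ^2*(k:ℝ)^2 = (k:ℝ)^2*(1+t)^2/σ^2 by ring]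
      gcongr
      nlinarith
    have e2 : |1 - (k:ℝ)^2*y^2/σ^2| ≤ 1 + (1+t)^2/σ^2*(k:ℝ)^2 := by
      rw [abs_le]; constructor <;> linarith
    calc |1 - (k:ℝ)^2*y^2/σ^2| * Real.exp (-((k:ℝ)^2 * y^2)/(2*σ^2))
        ≤ (1 + (1+t)^2/σ^2*(k:ℝ)^2) * Real.exp (-((t/2)^2/(2*σ^2) * (k:ℝ)^2)) := by
          apply mul_le_mul e2 e1 (Real.exp_nonneg _) (by positivity)
      _ = _ := by ring
  · apply Summable.congr ((sumS1 (show 0 < t^2/(2*σ^2) by positivity)).mul_left t)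
    intro k
    congr 1
    ring



lemma dual_term_hasDeriv (B : ℝ) (n : ℤ) (y : ℝ) (hy : y ≠ 0) :
    HasDerivAt (fun y : ℝ => Real.exp (-(B*(n:ℝ)^2)/y^2))
      ((2*B*(n:ℝ)^2/y^3) * Real.exp (-(B*(n:ℝ)^2)/y^2)) y := by
  have h1 : HasDerivAt (fun y : ℝ => -(B*(n:ℝ)^2)/y^2) (2*B*(n:ℝ)^2/y^3) y := by
    have h0 : HasDerivAt (fun y : ℝ => y^2) (2*y) y := by simpa using hasDerivAt_pow 2 y
    have h2 := (h0.inv (pow_ne_zero 2 hy)).const_mul (-(B*(n:ℝ)^2))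
    have heq : (fun y : ℝ => -(B*(n:ℝ)^2) * (y^2)⁻¹) = (fun y : ℝ => -(B*(n:ℝ)^2)/y^2) := by
      funext z; rw [div_eq_mul_inv]
    simp only [Pi.inv_apply] at h2
    rw [heq] at h2
    refine h2.congr_deriv ?_
    field_simp
  convert h1.exp using 1
  ring

lemma deriv_dual (σ : ℝ) (hσ : 0 < σ) (t : ℝ) (ht : 0 < t) :
    HasDerivAt (fun y : ℝ => ∑' n : ℤ, Real.exp (-(2*π^2*σ^2*(n:ℝ)^2)/y^2))
      (∑' n : ℤ, (2*(2*π^2*σ^2)*(n:ℝ)^2/t^3) * Real.exp (-(2*π^2*σ^2*(n:ℝ)^2)/t^2)) t := by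
  have hB : 0 < 2*π^2*σ^2 := by positivity
  have hε : 0 < 2*π^2*σ^2/(t+1)^2 := by positivity
  have htmem : t ∈ Set.Ioo (t/2) (t+1) := Set.mem_Ioo.2 ⟨by linarith, by linarith⟩
  refine hasDerivAt_tsum_of_isPreconnected
    (u := fun n : ℤ => (2*(2*π^2*σ^2)/(t/2)^3) *
        ((n:ℝ)^2 * Real.exp (-(2*π^2*σ^2/(t+1)^2 * (n:ℝ)^2))))
    ((sumZ2 hε).mul_left _) isOpen_Ioo (convex_Ioo _ _).isPreconnected
    (fun n y hy => dual_term_hasDeriv _ n y (by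
      obtain ⟨hy1, hy2⟩ := hy; have : 0 < y := lt_trans (by linarith) hy1; exact this.ne'))
    ?_ htmem ?_ htmem
  · intro n y hy
    obtain ⟨hy1, hy2⟩ := hy
    have hy0 : 0 < y := lt_trans (by linarith) hy1
    rw [Real.norm_eq_abs, abs_of_nonneg (by positivity)]
    have e1 : Real.exp (-(2*π^2*σ^2*(n:ℝ)^2)/y^2)
        ≤ Real.exp (-(2*π^2*σ^2/(t+1)^2 * (n:ℝ)^2)) := by
      apply Real.exp_le_exp.2
      rw [show -(2*π^2*σ^2/(t+1)^2 * (n:ℝ)^2) = -(2*π^2*σ^2*(n:ℝ)^2)/(t+1)^2 by ring]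
      rw [neg_div, neg_div, neg_le_neg_iff]
      gcongr
    have e2 : 2*(2*π^2*σ^2)*(n:ℝ)^2/y^3 ≤ 2*(2*π^2*σ^2)*(n:ℝ)^2/(t/2)^3 := by
      gcongr
    calc 2*(2*π^2*σ^2)*(n:ℝ)^2/y^3 * Real.exp (-(2*π^2*σ^2*(n:ℝ)^2)/y^2)
        ≤ 2*(2*π^2*σ^2)*(n:ℝ)^2/(t/2)^3 * Real.exp (-(2*π^2*σ^2/(t+1)^2 * (n:ℝ)^2)) := by
          apply mul_le_mul e2 e1 (Real.exp_nonneg _) (by positivity)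
      _ = _ := by ring
  · apply Summable.congr (sumZ1 (show 0 < 2*π^2*σ^2/t^2 by positivity))
    intro n
    congr 1
    ring



lemma theta_id (σ : ℝ) (hσ : 0 < σ) (t : ℝ) (ht : 0 < t) :
    t * ∑' k : ℕ, Real.exp (-((k:ℝ)^2 * t^2)/(2*σ^2))
      = t/2 + (σ * Real.sqrt (2*π)/2) * ∑' n : ℤ, Real.exp (-(2*π^2*σ^2*(n:ℝ)^2)/t^2) := by
  have hε : 0 < t^2/(2*σ^2) := by positivity
  have hS : Summable fun k : ℕ => Real.exp (-((k:ℝ)^2 * t^2)/(2*σ^2)) := by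
    apply (sumS1 hε).congr
    intro k; congr 1; ring
  have hS1 : Summable fun n : ℕ => Real.exp (-(((n:ℤ):ℝ)^2 * t^2)/(2*σ^2)) := by
    apply hS.congr; intro k; push_cast; ring_nf
  have hS2 : Summable fun n : ℕ => Real.exp (-((((-(n+1) : ℤ)):ℝ)^2 * t^2)/(2*σ^2)) := by
    apply Summable.of_nonneg_of_le (fun k => Real.exp_nonneg _) (fun k => ?_) hS
    apply Real.exp_le_exp.2
    rw [neg_div, neg_div, neg_le_neg_iff, div_le_div_iff_of_pos_right (by positivity)]
    push_cast
    nlinarith [sq_nonneg t, Nat.cast_nonneg (α := ℝ) k,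
      mul_nonneg (Nat.cast_nonneg (α := ℝ) k) (sq_nonneg t)]
  -- Z = 2 S - 1
  have hZ1 : ∑' n : ℤ, Real.exp (-((n:ℝ)^2 * t^2)/(2*σ^2))
      = 2 * (∑' k : ℕ, Real.exp (-((k:ℝ)^2 * t^2)/(2*σ^2))) - 1 := by
    rw [tsum_of_nat_of_neg_add_one (f := fun n : ℤ => Real.exp (-((n:ℝ)^2 * t^2)/(2*σ^2))) hS1 hS2]
    have h1 : ∑' n : ℕ, Real.exp (-(((n:ℤ):ℝ)^2 * t^2)/(2*σ^2))
        = ∑' k : ℕ, Real.exp (-((k:ℝ)^2 * t^2)/(2*σ^2)) := by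
      apply tsum_congr; intro k; push_cast; ring_nf
    have h2 : ∑' n : ℕ, Real.exp (-((((-(n+1) : ℤ)):ℝ)^2 * t^2)/(2*σ^2))
        = (∑' k : ℕ, Real.exp (-((k:ℝ)^2 * t^2)/(2*σ^2))) - 1 := by
      have h3 := hS.tsum_eq_zero_add
      have h4 : Real.exp (-(((0:ℕ):ℝ)^2 * t^2)/(2*σ^2)) = 1 := by norm_num
      rw [h4] at h3
      have h5 : ∑' n : ℕ, Real.exp (-((((-(n+1) : ℤ)):ℝ)^2 * t^2)/(2*σ^2))
          = ∑' n : ℕ, Real.exp (-((((n:ℕ)+1:ℝ))^2 * t^2)/(2*σ^2)) := by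
        apply tsum_congr; intro k; congr 1; push_cast; ring
      rw [h5]
      have h6 : ∑' n : ℕ, Real.exp (-((((n:ℕ)+1:ℝ))^2 * t^2)/(2*σ^2))
          = ∑' n : ℕ, Real.exp (-((((n+1:ℕ)):ℝ)^2 * t^2)/(2*σ^2)) := by
        apply tsum_congr; intro k; congr 1; push_cast; ring
      rw [h6]
      linarith [h3]
    rw [h1, h2]
    ring
  -- functional equation
  have key := Real.tsum_exp_neg_mul_int_sq (a := t^2/(2*π*σ^2)) (by positivity)
  have kL : (∑' n : ℤ, Real.exp (-π * (t^2/(2*π*σ^2)) * (n:ℝ)^2))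
      = ∑' n : ℤ, Real.exp (-((n:ℝ)^2 * t^2)/(2*σ^2)) := by
    apply tsum_congr; intro n; congr 1
    field_simp
  have kR : (∑' n : ℤ, Real.exp (-π / (t^2/(2*π*σ^2)) * (n:ℝ)^2))
      = ∑' n : ℤ, Real.exp (-(2*π^2*σ^2*(n:ℝ)^2)/t^2) := by
    apply tsum_congr; intro n; congr 1
    field_simp
  have hsqrt : (1:ℝ) / (t^2/(2*π*σ^2)) ^ ((1:ℝ)/2) = σ * Real.sqrt (2*π) / t := by
    rw [← Real.sqrt_eq_rpow, Real.sqrt_div (sq_nonneg t), Real.sqrt_sq ht.le]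
    rw [show 2*π*σ^2 = σ^2*(2*π) by ring, Real.sqrt_mul (sq_nonneg σ), Real.sqrt_sq hσ.le]
    rw [one_div, inv_div]
  rw [kL, kR, hsqrt] at key
  -- combine
  rw [hZ1] at key
  have hC : Real.sqrt (2*π) > 0 := Real.sqrt_pos.2 (by positivity)
  rw [div_mul_eq_mul_div, eq_div_iff ht.ne'] at key
  linear_combination key / 2



lemma sumG (σ : ℝ) (hσ : 0 < σ) (y : ℝ) (hy : 0 < y) :
    Summable fun k : ℕ => (1 - (k:ℝ)^2*y^2/σ^2) * Real.exp (-((k:ℝ)^2 * y^2)/(2*σ^2)) := by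
  have hε : 0 < y^2/(2*σ^2) := by positivity
  have hA : Summable fun k : ℕ => Real.exp (-((k:ℝ)^2 * y^2)/(2*σ^2)) := by
    apply (sumS1 hε).congr; intro k; congr 1; ring
  have hB : Summable fun k : ℕ => (y^2/σ^2) * ((k:ℝ)^2 * Real.exp (-((k:ℝ)^2 * y^2)/(2*σ^2))) := by
    apply Summable.mul_left
    apply (sumS2 hε).congr; intro k; congr 2; ring
  apply (hA.sub hB).congr
  intro k; ring

lemma M1 (σ : ℝ) (hσ : 0 < σ) (s t : ℝ) (hs : σ * Real.sqrt 3 ≤ s) (hst : s ≤ t) :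
    (∑' k : ℕ, (1 - (k:ℝ)^2*s^2/σ^2) * Real.exp (-((k:ℝ)^2 * s^2)/(2*σ^2)))
      ≤ ∑' k : ℕ, (1 - (k:ℝ)^2*t^2/σ^2) * Real.exp (-((k:ℝ)^2 * t^2)/(2*σ^2)) := by
  have h3 : Real.sqrt 3 ^ 2 = 3 := Real.sq_sqrt (by norm_num)
  have hs3 : 0 < Real.sqrt 3 := Real.sqrt_pos.2 (by norm_num)
  have hs0 : 0 < s := lt_of_lt_of_le (by positivity) hs
  have ht0 : 0 < t := lt_of_lt_of_le hs0 hst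
  refine Summable.tsum_le_tsum ?_ (sumG σ hσ s hs0) (sumG σ hσ t ht0)
  intro k
  rcases Nat.eq_zero_or_pos k with hk | hk
  · subst hk; norm_num
  · have hk1 : (1:ℝ) ≤ (k:ℝ) := by exact_mod_cast hk
    have hk2 : (1:ℝ) ≤ (k:ℝ)^2 := by nlinarith
    have hsq : 3 * σ^2 ≤ s^2 := by
      nlinarith [mul_le_mul hs hs (by positivity : (0:ℝ) ≤ σ * Real.sqrt 3) hs0.le]
    have hsqt : s^2 ≤ t^2 := by nlinarith [mul_le_mul hst hst hs0.le ht0.le]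
    have heq : ∀ y : ℝ, (1 - 2*((k:ℝ)^2*y^2/(2*σ^2))) * Real.exp (-((k:ℝ)^2*y^2/(2*σ^2)))
        = (1 - (k:ℝ)^2*y^2/σ^2) * Real.exp (-((k:ℝ)^2 * y^2)/(2*σ^2)) := by
      intro y
      rw [show -((k:ℝ)^2*y^2/(2*σ^2)) = -((k:ℝ)^2*y^2)/(2*σ^2) by ring]
      congr 1
      field_simp
    have hws : (3/2 : ℝ) ≤ (k:ℝ)^2*s^2/(2*σ^2) := by
      rw [le_div_iff₀ (by positivity)]
      nlinarith [mul_le_mul_of_nonneg_right hk2 (sq_nonneg s)]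
    have hwt : (3/2 : ℝ) ≤ (k:ℝ)^2*t^2/(2*σ^2) := by
      rw [le_div_iff₀ (by positivity)]
      nlinarith [mul_le_mul_of_nonneg_right hk2 (sq_nonneg s)]
    have hle : (k:ℝ)^2*s^2/(2*σ^2) ≤ (k:ℝ)^2*t^2/(2*σ^2) := by gcongr
    have key := phi_mono (Set.mem_Ici.2 hws) (Set.mem_Ici.2 hwt) hle
    simp only at key
    rw [heq s, heq t] at key
    exact key

lemma dualterm_mono (β : ℝ) (hβ : 0 < β) (s t : ℝ) (hs0 : 0 < s) (hst : s ≤ t)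
    (h32 : (3/2 : ℝ) ≤ β/t^2) :
    (2*β/s^3) * Real.exp (-β/s^2) ≤ (2*β/t^3) * Real.exp (-β/t^2) := by
  have ht0 : 0 < t := lt_of_lt_of_le hs0 hst
  have hws : (3/2 : ℝ) ≤ β/s^2 := le_trans h32 (by gcongr)
  have hle : β/t^2 ≤ β/s^2 := by gcongr
  have key := psi_anti (Set.mem_Ici.2 h32) (Set.mem_Ici.2 hws) hle
  simp only at key
  have hconv : ∀ y : ℝ, 0 < y → (β/y^2) * Real.sqrt (β/y^2) * Real.exp (-(β/y^2))
      = (Real.sqrt β / 2) * ((2*β/y^3) * Real.exp (-β/y^2)) := by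
    intro y hy
    rw [Real.sqrt_div hβ.le, Real.sqrt_sq hy.le, show -(β/y^2) = -β/y^2 by ring]
    field_simp
  rw [hconv s hs0, hconv t ht0] at key
  exact (mul_le_mul_iff_right₀ (by positivity : 0 < Real.sqrt β / 2)).1 key

lemma M2 (σ : ℝ) (hσ : 0 < σ) (s t : ℝ) (hs0 : 0 < s) (hst : s ≤ t)
    (ht : t ≤ 2*π*σ/Real.sqrt 3) :
    (∑' n : ℤ, (2*(2*π^2*σ^2)*(n:ℝ)^2/s^3) * Real.exp (-(2*π^2*σ^2*(n:ℝ)^2)/s^2))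
      ≤ ∑' n : ℤ, (2*(2*π^2*σ^2)*(n:ℝ)^2/t^3) * Real.exp (-(2*π^2*σ^2*(n:ℝ)^2)/t^2) := by
  have ht0 : 0 < t := lt_of_lt_of_le hs0 hst
  have h3 : Real.sqrt 3 ^ 2 = 3 := Real.sq_sqrt (by norm_num)
  have hs3 : 0 < Real.sqrt 3 := Real.sqrt_pos.2 (by norm_num)
  have hsum : ∀ y : ℝ, 0 < y → Summable fun n : ℤ =>
      (2*(2*π^2*σ^2)*(n:ℝ)^2/y^3) * Real.exp (-(2*π^2*σ^2*(n:ℝ)^2)/y^2) := by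
    intro y hy
    have hε : 0 < 2*π^2*σ^2/y^2 := by positivity
    apply ((sumZ2 hε).mul_left (2*(2*π^2*σ^2)/y^3)).congr
    intro n
    rw [show -(2*π^2*σ^2/y^2 * (n:ℝ)^2) = -(2*π^2*σ^2*(n:ℝ)^2)/y^2 by ring]
    ring
  refine Summable.tsum_le_tsum ?_ (hsum s hs0) (hsum t ht0)
  intro n
  rcases eq_or_ne n 0 with hn | hn
  · subst hn; norm_num
  · have hn1 : (1:ℝ) ≤ (n:ℝ)^2 := by
      have h := Int.one_le_abs hn
      have h2 : (1:ℝ) ≤ |(n:ℝ)| := by exact_mod_cast (by exact_mod_cast h : (1:ℤ) ≤ |n|)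
      nlinarith [sq_abs ((n:ℝ))]
    have hβ0 : 0 < 2*π^2*σ^2*(n:ℝ)^2 := by
      have hnn : (0:ℝ) < (n:ℝ)^2 := by nlinarith
      positivity
    have h1 : t * Real.sqrt 3 ≤ 2*π*σ := (le_div_iff₀ hs3).1 ht
    have htsq : t^2 * 3 ≤ 4*π^2*σ^2 := by
      nlinarith [mul_le_mul h1 h1 (by positivity : (0:ℝ) ≤ t * Real.sqrt 3) (by positivity : (0:ℝ) ≤ 2*π*σ)]
    have h32 : (3/2 : ℝ) ≤ 2*π^2*σ^2*(n:ℝ)^2/t^2 := by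
      rw [le_div_iff₀ (by positivity)]
      nlinarith [mul_le_mul_of_nonneg_left hn1 (show (0:ℝ) ≤ 2*π^2*σ^2 by positivity)]
    have heqy : ∀ y : ℝ, 2*(2*π^2*σ^2)*(n:ℝ)^2/y^3 = 2*(2*π^2*σ^2*(n:ℝ)^2)/y^3 := fun y => by ring
    rw [heqy s, heqy t]
    exact dualterm_mono _ hβ0 s t hs0 hst h32

/-- For `σ > 0`, the function `g(t) = t·Σ_{k=0}^{∞} e^{-k²t²/(2σ²)}` is convex on `(0, ∞)`. -/
theorem t_mul_theta_sum_convex (σ : ℝ) (hσ : 0 < σ) :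
    ConvexOn ℝ (Set.Ioi (0 : ℝ))
      (fun t : ℝ => t * ∑' k : ℕ, Real.exp (-((k : ℝ) ^ 2 * t ^ 2) / (2 * σ ^ 2))) := by
  have h3 : Real.sqrt 3 ^ 2 = 3 := Real.sq_sqrt (by norm_num)
  have hs3 : 0 < Real.sqrt 3 := Real.sqrt_pos.2 (by norm_num)
  have hC2 : 0 < Real.sqrt (2*π) := Real.sqrt_pos.2 (by positivity)
  have hCpos : 0 < σ * Real.sqrt (2*π) / 2 := by positivity
  set f : ℝ → ℝ := fun t : ℝ => t * ∑' k : ℕ, Real.exp (-((k : ℝ) ^ 2 * t ^ 2) / (2 * σ ^ 2))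
    with hf
  have hder : ∀ x ∈ Set.Ioi (0:ℝ), HasDerivAt f
      (∑' k : ℕ, (1 - (k:ℝ)^2*x^2/σ^2) * Real.exp (-((k:ℝ)^2 * x^2)/(2*σ^2))) x :=
    fun x hx => deriv_orig σ hσ x hx
  have hder2 : ∀ x ∈ Set.Ioi (0:ℝ), HasDerivAt f
      ((1:ℝ)/2 + (σ * Real.sqrt (2*π) / 2) *
        ∑' n : ℤ, (2*(2*π^2*σ^2)*(n:ℝ)^2/x^3) * Real.exp (-(2*π^2*σ^2*(n:ℝ)^2)/x^2)) x := by
    intro x hx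
    have hx0 : 0 < x := hx
    have h1 := (deriv_dual σ hσ x hx0).const_mul (σ * Real.sqrt (2*π) / 2)
    have h2 : HasDerivAt (fun y : ℝ => y/2) ((1:ℝ)/2) x := by
      simpa using (hasDerivAt_id x).div_const 2
    have base := h2.add h1
    refine HasDerivAt.congr_of_eventuallyEq base ?_
    filter_upwards [IsOpen.mem_nhds isOpen_Ioi hx] with y hy
    exact theta_id σ hσ y hy
  have hmono : MonotoneOn (deriv f) (Set.Ioi (0:ℝ)) := by
    intro s hs t ht hst
    by_cases h1 : t ≤ 2*π*σ/Real.sqrt 3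
    · rw [(hder2 s hs).deriv, (hder2 t ht).deriv]
      have hM := M2 σ hσ s t hs hst h1
      nlinarith [mul_le_mul_of_nonneg_left hM hCpos.le]
    · push_neg at h1
      have hTle : σ * Real.sqrt 3 ≤ 2*π*σ/Real.sqrt 3 := by
        rw [le_div_iff₀ hs3]
        nlinarith [pi_gt_three]
      by_cases h2 : σ * Real.sqrt 3 ≤ s
      · rw [(hder s hs).deriv, (hder t ht).deriv]
        exact M1 σ hσ s t h2 hst
      · push_neg at h2
        have hmmem : σ * Real.sqrt 3 ∈ Set.Ioi (0:ℝ) := by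
          simp only [Set.mem_Ioi]; positivity
        have step1 : deriv f s ≤ deriv f (σ * Real.sqrt 3) := by
          rw [(hder2 s hs).deriv, (hder2 _ hmmem).deriv]
          have hM := M2 σ hσ s (σ * Real.sqrt 3) hs h2.le hTle
          nlinarith [mul_le_mul_of_nonneg_left hM hCpos.le]
        have step2 : deriv f (σ * Real.sqrt 3) ≤ deriv f t := by
          rw [(hder _ hmmem).deriv, (hder t ht).deriv]
          exact M1 σ hσ _ t le_rfl (hTle.trans h1.le)
        linarith
  exact MonotoneOn.convexOn_of_deriv (convex_Ioi 0)
    (fun x hx => (hder x hx).differentiableAt.continuousAt.continuousWithinAt)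
    (by rw [interior_Ioi]; exact fun x hx => (hder x hx).differentiableAt.differentiableWithinAt)
    (by rw [interior_Ioi]; exact hmono)
end

section
/- Let σ > 0, α ≥ 0 and β ≥ 0. The function ℰ(T) = (α + βT) · Σ_{k=0}^{∞} e^{-k²T²/(2σ²)} − βσ√(π/2) is convex on the interval (0, ∞). -/
open Real

open Set


private lemma slope_lb {f : ℝ → ℝ} {x y z c : ℝ} (hxy : x < y) (hyz : y < z)
    (h1 : c ≤ (f y - f x) / (y - x)) (h2 : c ≤ (f z - f y) / (z - y)) :
    c ≤ (f z - f x) / (z - x) := by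
  rw [le_div_iff₀ (by linarith)] at h1 h2 ⊢
  nlinarith

private lemma slope_ub {f : ℝ → ℝ} {x y z c : ℝ} (hxy : x < y) (hyz : y < z)
    (h1 : (f y - f x) / (y - x) ≤ c) (h2 : (f z - f y) / (z - y) ≤ c) :
    (f z - f x) / (z - x) ≤ c := by
  rw [div_le_iff₀ (by linarith)] at h1 h2 ⊢
  nlinarith

private lemma convexOn_Ioi_of_glue {a b : ℝ} {f : ℝ → ℝ} (h0 : 0 < a) (hab : a < b)
    (h1 : ConvexOn ℝ (Ioo 0 b) f) (h2 : ConvexOn ℝ (Ici a) f) :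
    ConvexOn ℝ (Ioi 0) f := by
  refine convexOn_of_slope_mono_adjacent (convex_Ioi 0) ?_
  intro x y z hx hz hxy hyz
  simp only [mem_Ioi] at hx hz
  have hy0 : 0 < y := hx.trans hxy
  by_cases hzb : z < b
  · exact h1.slope_mono_adjacent ⟨hx, by linarith⟩ ⟨hz, hzb⟩ hxy hyz
  by_cases hax : a ≤ x
  · exact h2.slope_mono_adjacent hax (by simp only [mem_Ici]; linarith) hxy hyz
  push_neg at hzb hax
  by_cases hyb : y < b
  · -- pick w ∈ (max y a, b), m ∈ (w, b)
    set w : ℝ := (max y a + b) / 2 with hw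
    have hMab : max y a < b := max_lt hyb hab
    have hwy : y < w := lt_of_le_of_lt (le_max_left y a) (by simp only [hw]; linarith)
    have hwa : a < w := lt_of_le_of_lt (le_max_right y a) (by simp only [hw]; linarith)
    have hwb : w < b := by simp only [hw]; linarith
    set m : ℝ := (w + b) / 2 with hm
    have hwm : w < m := by simp only [hm]; linarith
    have hmb : m < b := by simp only [hm]; linarith
    have hmz : m < z := lt_of_lt_of_le hmb hzb
    have hw0 : 0 < w := hy0.trans hwy
    have s1 : (f y - f x) / (y - x) ≤ (f w - f y) / (w - y) :=
      h1.slope_mono_adjacent ⟨hx, by linarith⟩ ⟨hw0, hwb⟩ hxy hwy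
    have s2 : (f w - f y) / (w - y) ≤ (f m - f w) / (m - w) :=
      h1.slope_mono_adjacent ⟨hy0, hyb⟩ ⟨hw0.trans hwm, hmb⟩ hwy hwm
    have s3 : (f m - f w) / (m - w) ≤ (f z - f m) / (z - m) :=
      h2.slope_mono_adjacent (le_of_lt hwa) (by simp only [mem_Ici]; linarith) hwm hmz
    have c1 : (f y - f x) / (y - x) ≤ (f z - f w) / (z - w) :=
      slope_lb hwm hmz (s1.trans s2) (s1.trans (s2.trans s3))
    exact slope_lb hwy (hwm.trans hmz) s1 c1
  · push_neg at hyb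
    set w : ℝ := (a + b) / 2 with hw
    have hxw : x < w := by simp only [hw]; linarith
    have haw : a < w := by simp only [hw]; linarith
    have hwb : w < b := by simp only [hw]; linarith
    set m : ℝ := (w + b) / 2 with hm
    have hwm : w < m := by simp only [hm]; linarith
    have hmb : m < b := by simp only [hm]; linarith
    have hmy : m < y := lt_of_lt_of_le hmb hyb
    have hw0 : 0 < w := hx.trans hxw
    have s1 : (f w - f x) / (w - x) ≤ (f m - f w) / (m - w) :=
      h1.slope_mono_adjacent ⟨hx, by linarith⟩ ⟨hw0.trans hwm, hmb⟩ hxw hwm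
    have s2 : (f m - f w) / (m - w) ≤ (f y - f m) / (y - m) :=
      h2.slope_mono_adjacent (le_of_lt haw) (by simp only [mem_Ici]; linarith) hwm hmy
    have s3 : (f y - f m) / (y - m) ≤ (f z - f y) / (z - y) :=
      h2.slope_mono_adjacent (by simp only [mem_Ici]; linarith) (by simp only [mem_Ici]; linarith) hmy hyz
    have c1 : (f y - f w) / (y - w) ≤ (f z - f y) / (z - y) :=
      slope_ub hwm hmy (s2.trans s3) s3
    exact slope_ub hxw (hwm.trans hmy) ((s1.trans s2).trans s3) c1


private lemma summable_exp_aux {c : ℝ} (hc : 0 < c) (g : ℕ → ℝ)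
    (hg : ∀ k, g k ≤ -(c * (k : ℝ) ^ 2)) : Summable fun k => Real.exp (g k) := by
  refine Summable.of_nonneg_of_le (fun k => (Real.exp_pos _).le) (fun k => ?_)
    (summable_geometric_of_lt_one (Real.exp_nonneg (-c)) (by rwa [Real.exp_lt_one_iff, neg_lt_zero]))
  have h1 : Real.exp (-c) ^ k = Real.exp ((k : ℝ) * (-c)) := by
    rw [← Real.exp_nat_mul]
  rw [h1]
  apply Real.exp_le_exp.2
  have h2 : (k : ℝ) ≤ (k : ℝ) ^ 2 := by
    have := Nat.le_self_pow two_ne_zero k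
    exact_mod_cast this
  calc g k ≤ -(c * (k:ℝ)^2) := hg k
    _ ≤ (k : ℝ) * (-c) := by nlinarith

private lemma convexOn_tsum {s : Set ℝ} {f : ℕ → ℝ → ℝ}
    (hs : Convex ℝ s) (hf : ∀ k, ConvexOn ℝ s (f k))
    (hsum : ∀ x ∈ s, Summable fun k => f k x) :
    ConvexOn ℝ s fun x => ∑' k, f k x := by
  refine ⟨hs, fun x hx y hy p q hp hq hpq => ?_⟩
  have hmem : p • x + q • y ∈ s := hs hx hy hp hq hpq
  have h1 : Summable fun k => f k (p • x + q • y) := hsum _ hmem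
  have hx' := hsum x hx
  have hy' := hsum y hy
  have h2 : Summable fun k => p • f k x + q • f k y := by
    simp only [smul_eq_mul]
    exact (hx'.mul_left p).add (hy'.mul_left q)
  calc (∑' k, f k (p • x + q • y)) ≤ ∑' k, (p • f k x + q • f k y) :=
        Summable.tsum_le_tsum (fun k => (hf k).2 hx hy hp hq hpq) h1 h2
    _ = p • (∑' k, f k x) + q • (∑' k, f k y) := by
        simp only [smul_eq_mul]
        rw [Summable.tsum_add (hx'.mul_left p) (hy'.mul_left q), tsum_mul_left, tsum_mul_left]


private lemma convexOn_large {α β q t₀ : ℝ} (hα : 0 ≤ α) (hβ : 0 ≤ β) (hq : 0 ≤ q)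
    (ht₀ : 0 < t₀) (hcond : q = 0 ∨ 3 ≤ 2 * q * t₀ ^ 2) :
    ConvexOn ℝ (Ici t₀) fun T => (α + β * T) * Real.exp (-(q * T ^ 2)) := by
  have hder : ∀ x : ℝ, HasDerivAt (fun T => (α + β * T) * Real.exp (-(q * T ^ 2)))
      (Real.exp (-(q * x ^ 2)) * (β - 2 * q * x * (α + β * x))) x := by
    intro x
    have h1 : HasDerivAt (fun T : ℝ => α + β * T) β x := by
      simpa using ((hasDerivAt_id x).const_mul β).const_add α
    have h2 : HasDerivAt (fun T : ℝ => -(q * T ^ 2)) (-(q * (2 * x ^ 1))) x :=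
      ((hasDerivAt_pow 2 x).const_mul q).neg
    have h3 := h2.exp
    have := h1.mul h3
    exact this.congr_deriv (by ring)
  have hder2 : ∀ x : ℝ, HasDerivAt (fun T => Real.exp (-(q * T ^ 2)) * (β - 2 * q * T * (α + β * T)))
      (Real.exp (-(q * x ^ 2)) * ((α + β * x) * (4 * q ^ 2 * x ^ 2 - 2 * q) - 4 * β * q * x)) x := by
    intro x
    have h1 : HasDerivAt (fun T : ℝ => α + β * T) β x := by
      simpa using ((hasDerivAt_id x).const_mul β).const_add α
    have h2 : HasDerivAt (fun T : ℝ => -(q * T ^ 2)) (-(q * (2 * x ^ 1))) x :=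
      ((hasDerivAt_pow 2 x).const_mul q).neg
    have h3 := h2.exp
    have h4 : HasDerivAt (fun T : ℝ => 2 * q * T * (α + β * T))
        (2 * q * 1 * (α + β * x) + 2 * q * x * β) x := by
      have := (((hasDerivAt_id x).const_mul (2 * q)).mul h1)
      exact this
    have h5 := h4.const_sub β
    have := h3.mul h5
    exact this.congr_deriv (by ring)
  refine convexOn_of_hasDerivWithinAt2_nonneg (convex_Ici t₀)
    (f' := fun x => Real.exp (-(q * x ^ 2)) * (β - 2 * q * x * (α + β * x)))
    (f'' := fun x => Real.exp (-(q * x ^ 2)) * ((α + β * x) * (4 * q ^ 2 * x ^ 2 - 2 * q) - 4 * β * q * x))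
    (fun x hx => ((hder x).continuousAt.continuousWithinAt))
    (fun x hx => (hder x).hasDerivWithinAt)
    (fun x hx => (hder2 x).hasDerivWithinAt) ?_
  intro x hx
  rw [interior_Ici, mem_Ioi] at hx
  have hx0 : 0 < x := ht₀.trans hx
  apply mul_nonneg (Real.exp_pos _).le
  rcases hcond with h | h
  · simp [h]
  · have hq' : 0 < q := by nlinarith
    have h3 : 3 ≤ 2 * q * x ^ 2 := by nlinarith
    nlinarith [mul_nonneg (mul_nonneg hβ hx0.le) (by linarith : (0:ℝ) ≤ 2 * q * x ^ 2 - 3),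
      mul_nonneg hα (by linarith : (0:ℝ) ≤ 2 * q * x ^ 2 - 1), hq'.le,
      mul_nonneg hα hq'.le, mul_nonneg (mul_nonneg (mul_nonneg hβ hx0.le) hq'.le) (by linarith : (0:ℝ) ≤ 2 * q * x ^ 2 - 3)]

private lemma convexOn_small {α β c σ : ℝ} (hα : 0 ≤ α) (hβ : 0 ≤ β) (hσ : 0 < σ)
    (hc : 12 * σ ^ 2 ≤ c) :
    ConvexOn ℝ (Ioo 0 (2 * σ)) fun T => (α * T⁻¹ + β) * Real.exp (-(c * T⁻¹ ^ 2)) := by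
  have hc0 : 0 < c := lt_of_lt_of_le (by positivity) hc
  have hder : ∀ x ∈ Ioo (0:ℝ) (2 * σ), HasDerivAt (fun T => (α * T⁻¹ + β) * Real.exp (-(c * T⁻¹ ^ 2)))
      (Real.exp (-(c * x⁻¹ ^ 2)) * (2 * α * c * x⁻¹ ^ 4 + 2 * β * c * x⁻¹ ^ 3 - α * x⁻¹ ^ 2)) x := by
    intro x hx
    have hx0 : x ≠ 0 := ne_of_gt hx.1
    have hs : HasDerivAt (fun T : ℝ => T⁻¹) (-(x ^ 2)⁻¹) x := hasDerivAt_inv hx0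
    have hlin : HasDerivAt (fun T : ℝ => α * T⁻¹ + β) (α * -(x ^ 2)⁻¹) x :=
      (hs.const_mul α).add_const β
    have hsq : HasDerivAt (fun T : ℝ => T⁻¹ ^ 2) ((2 : ℕ) * x⁻¹ ^ 1 * -(x ^ 2)⁻¹) x := hs.pow 2
    have hexp := ((hsq.const_mul c).neg).exp
    have := hlin.mul hexp
    refine this.congr_deriv ?_
    simp only [Pi.neg_apply]
    field_simp
    ring
  have hder2 : ∀ x ∈ Ioo (0:ℝ) (2 * σ), HasDerivAt
      (fun T => Real.exp (-(c * T⁻¹ ^ 2)) * (2 * α * c * T⁻¹ ^ 4 + 2 * β * c * T⁻¹ ^ 3 - α * T⁻¹ ^ 2))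
      (Real.exp (-(c * x⁻¹ ^ 2)) * (α * (4 * c ^ 2 * x⁻¹ ^ 7 - 10 * c * x⁻¹ ^ 5 + 2 * x⁻¹ ^ 3)
        + β * (4 * c ^ 2 * x⁻¹ ^ 6 - 6 * c * x⁻¹ ^ 4))) x := by
    intro x hx
    have hx0 : x ≠ 0 := ne_of_gt hx.1
    have hs : HasDerivAt (fun T : ℝ => T⁻¹) (-(x ^ 2)⁻¹) x := hasDerivAt_inv hx0
    have hsq : HasDerivAt (fun T : ℝ => T⁻¹ ^ 2) ((2 : ℕ) * x⁻¹ ^ 1 * -(x ^ 2)⁻¹) x := hs.pow 2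
    have hexp := ((hsq.const_mul c).neg).exp
    have hQ : HasDerivAt (fun T : ℝ => 2 * α * c * T⁻¹ ^ 4 + 2 * β * c * T⁻¹ ^ 3 - α * T⁻¹ ^ 2)
        (2 * α * c * ((4 : ℕ) * x⁻¹ ^ 3 * -(x ^ 2)⁻¹) + 2 * β * c * ((3 : ℕ) * x⁻¹ ^ 2 * -(x ^ 2)⁻¹)
          - α * ((2 : ℕ) * x⁻¹ ^ 1 * -(x ^ 2)⁻¹)) x := by
      exact (((hs.pow 4).const_mul (2 * α * c)).add ((hs.pow 3).const_mul (2 * β * c))).sub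
        ((hs.pow 2).const_mul α)
    have := hexp.mul hQ
    refine this.congr_deriv ?_
    simp only [Pi.neg_apply]
    field_simp
    ring
  have hpos : ∀ x ∈ Ioo (0:ℝ) (2 * σ),
      0 ≤ Real.exp (-(c * x⁻¹ ^ 2)) * (α * (4 * c ^ 2 * x⁻¹ ^ 7 - 10 * c * x⁻¹ ^ 5 + 2 * x⁻¹ ^ 3)
        + β * (4 * c ^ 2 * x⁻¹ ^ 6 - 6 * c * x⁻¹ ^ 4)) := by
    intro x hx
    have hx0 : 0 < x := hx.1
    have hs0 : 0 < x⁻¹ := inv_pos.2 hx0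
    have hkey : x ^ 2 * x⁻¹ ^ 2 = 1 := by field_simp
    have hcx : 3 * x ^ 2 ≤ c := by nlinarith [hx.2, hσ]
    have h3 : 3 ≤ c * x⁻¹ ^ 2 := by nlinarith [pow_pos hs0 2, mul_le_mul_of_nonneg_right hcx (pow_pos hs0 2).le]
    apply mul_nonneg (Real.exp_pos _).le
    have hA : 0 ≤ 4 * c ^ 2 * x⁻¹ ^ 7 - 10 * c * x⁻¹ ^ 5 + 2 * x⁻¹ ^ 3 := by
      have hu : 0 ≤ (c * x⁻¹ ^ 2 - 3) * (4 * (c * x⁻¹ ^ 2) + 2) :=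
        mul_nonneg (by linarith) (by nlinarith)
      have : 0 ≤ 4 * (c * x⁻¹ ^ 2) ^ 2 - 10 * (c * x⁻¹ ^ 2) + 2 := by nlinarith
      calc (0:ℝ) ≤ x⁻¹ ^ 3 * (4 * (c * x⁻¹ ^ 2) ^ 2 - 10 * (c * x⁻¹ ^ 2) + 2) :=
            mul_nonneg (pow_pos hs0 3).le this
        _ = 4 * c ^ 2 * x⁻¹ ^ 7 - 10 * c * x⁻¹ ^ 5 + 2 * x⁻¹ ^ 3 := by ring
    have hB : 0 ≤ 4 * c ^ 2 * x⁻¹ ^ 6 - 6 * c * x⁻¹ ^ 4 := by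
      have : 0 ≤ x⁻¹ ^ 4 * (2 * (c * x⁻¹ ^ 2) - 3) * (2 * c) := by
        apply mul_nonneg (mul_nonneg (pow_pos hs0 4).le (by linarith)) (by linarith)
      calc (0:ℝ) ≤ x⁻¹ ^ 4 * (2 * (c * x⁻¹ ^ 2) - 3) * (2 * c) := this
        _ = 4 * c ^ 2 * x⁻¹ ^ 6 - 6 * c * x⁻¹ ^ 4 := by ring
    nlinarith [mul_nonneg hα hA, mul_nonneg hβ hB]
  rw [show Ioo (0:ℝ) (2*σ) = Ioo (0:ℝ) (2*σ) from rfl]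
  refine convexOn_of_hasDerivWithinAt2_nonneg (convex_Ioo 0 (2*σ))
    (f' := fun x => Real.exp (-(c * x⁻¹ ^ 2)) * (2 * α * c * x⁻¹ ^ 4 + 2 * β * c * x⁻¹ ^ 3 - α * x⁻¹ ^ 2))
    (f'' := fun x => Real.exp (-(c * x⁻¹ ^ 2)) * (α * (4 * c ^ 2 * x⁻¹ ^ 7 - 10 * c * x⁻¹ ^ 5 + 2 * x⁻¹ ^ 3)
        + β * (4 * c ^ 2 * x⁻¹ ^ 6 - 6 * c * x⁻¹ ^ 4)))
    (fun x hx => ((hder x hx).continuousAt.continuousWithinAt))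
    (fun x hx => ?_) (fun x hx => ?_) (fun x hx => ?_)
  · rw [interior_Ioo] at hx
    exact ((hder x hx).hasDerivWithinAt)
  · rw [interior_Ioo] at hx
    exact ((hder2 x hx).hasDerivWithinAt)
  · rw [interior_Ioo] at hx
    exact hpos x hx

private lemma tsum_int_even {f : ℤ → ℝ} (hf : ∀ n : ℤ, f (-n) = f n)
    (h1 : Summable fun n : ℕ => f n) :
    Summable f ∧ (∑' n : ℤ, f n) = f 0 + 2 * ∑' k : ℕ, f ((k : ℤ) + 1) := by
  have h2 : (fun n : ℕ => f (-((n : ℤ) + 1))) = fun n : ℕ => f ((n : ℤ) + 1) := by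
    funext n; exact hf _
  have h1' : Summable fun n : ℕ => f ((n : ℤ) + 1) := by
    have := h1.comp_injective (fun a b h => by simpa using h : Function.Injective fun n : ℕ => n + 1)
    simpa [Function.comp_def] using this
  have h2' : Summable fun n : ℕ => f (-((n : ℤ) + 1)) := by rw [h2]; exact h1'
  have hsum : Summable f := Summable.of_nat_of_neg_add_one h1 h2'
  refine ⟨hsum, ?_⟩
  rw [tsum_of_nat_of_neg_add_one h1 h2', h2, Summable.tsum_eq_zero_add h1]
  push_cast
  ring

private lemma theta_transform {σ T : ℝ} (hσ : 0 < σ) (hT : 0 < T) :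
    (∑' k : ℕ, Real.exp (-((k : ℝ) ^ 2 * T ^ 2) / (2 * σ ^ 2))) =
      1 / 2 + Real.sqrt (2 * π) * σ * T⁻¹ *
        (1 / 2 + ∑' k : ℕ, Real.exp (-(2 * π ^ 2 * σ ^ 2 * ((k : ℝ) + 1) ^ 2 * T⁻¹ ^ 2))) := by
  have hπ := Real.pi_pos
  set a : ℝ := T ^ 2 / (2 * π * σ ^ 2) with ha_def
  have ha : 0 < a := by positivity
  -- the two even functions on ℤ
  have key := Real.tsum_exp_neg_mul_int_sq ha
  have heven1 : ∀ n : ℤ, Real.exp (-π * a * ((-n : ℤ) : ℝ) ^ 2) = Real.exp (-π * a * (n : ℝ) ^ 2) := by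
    intro n; push_cast; ring_nf
  have heven2 : ∀ n : ℤ, Real.exp (-π / a * ((-n : ℤ) : ℝ) ^ 2) = Real.exp (-π / a * (n : ℝ) ^ 2) := by
    intro n; push_cast; ring_nf
  have hs1 : Summable fun n : ℕ => Real.exp (-π * a * (n : ℝ) ^ 2) := by
    apply summable_exp_aux (by positivity : (0:ℝ) < π * a)
    intro k; apply le_of_eq; push_cast; ring
  have hs2 : Summable fun n : ℕ => Real.exp (-π / a * (n : ℝ) ^ 2) := by
    apply summable_exp_aux (by positivity : (0:ℝ) < π / a)
    intro k
    apply le_of_eq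
    rw [neg_div]
    push_cast; ring
  obtain ⟨hsum1, heq1⟩ := tsum_int_even (f := fun n : ℤ => Real.exp (-π * a * (n : ℝ) ^ 2)) heven1 (by exact_mod_cast hs1)
  obtain ⟨hsum2, heq2⟩ := tsum_int_even (f := fun n : ℤ => Real.exp (-π / a * (n : ℝ) ^ 2)) heven2 (by exact_mod_cast hs2)
  rw [heq1, heq2] at key
  simp only [Int.cast_zero, ne_eq, OfNat.ofNat_ne_zero, not_false_eq_true, zero_pow, mul_zero,
    Real.exp_zero] at key
  -- identify coefficient
  have hsqrt2pi : 0 < Real.sqrt (2 * π) := Real.sqrt_pos.2 (by positivity)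
  have hcoef : (1 : ℝ) / a ^ (1/2 : ℝ) = Real.sqrt (2 * π) * σ * T⁻¹ := by
    rw [← Real.sqrt_eq_rpow]
    have ha2 : a = (T / (Real.sqrt (2 * π) * σ)) ^ 2 := by
      rw [div_pow, mul_pow, Real.sq_sqrt (by positivity : (0:ℝ) ≤ 2 * π)]
    rw [ha2, Real.sqrt_sq (by positivity)]
    field_simp
  rw [hcoef] at key
  -- identify the two ℕ-sums with the statement's sums
  have hL : (∑' k : ℕ, Real.exp (-((k : ℝ) ^ 2 * T ^ 2) / (2 * σ ^ 2))) =
      ∑' k : ℕ, Real.exp (-π * a * (k : ℝ) ^ 2) := by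
    apply tsum_congr; intro k
    congr 1
    rw [ha_def]
    field_simp
  have hL2 : (∑' k : ℕ, Real.exp (-π * a * (k : ℝ) ^ 2)) =
      1 + ∑' k : ℕ, Real.exp (-π * a * (((k : ℤ) + 1 : ℤ) : ℝ) ^ 2) := by
    rw [Summable.tsum_eq_zero_add (by exact_mod_cast hs1)]
    push_cast
    norm_num
  have hR : (∑' k : ℕ, Real.exp (-π / a * (((k : ℤ) + 1 : ℤ) : ℝ) ^ 2)) =
      ∑' k : ℕ, Real.exp (-(2 * π ^ 2 * σ ^ 2 * ((k : ℝ) + 1) ^ 2 * T⁻¹ ^ 2)) := by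
    apply tsum_congr; intro k
    congr 1
    rw [ha_def, neg_div]
    push_cast
    field_simp
  rw [hL, hL2]
  rw [hR] at key
  -- key : 1 + 2 * ∑' old = coef * (1 + 2 * S)
  -- goal : 1 + ∑' old' = 1/2 + coef * (1/2 + S)
  have hold : (∑' k : ℕ, Real.exp (-π * a * (((k : ℤ) + 1 : ℤ) : ℝ) ^ 2)) =
      (∑' k : ℕ, Real.exp (-π * a * (((k : ℤ) + 1 : ℤ) : ℝ) ^ 2)) := rfl
  linarith [key]

/-- For `σ > 0`, `α ≥ 0`, `β ≥ 0`, the Rayleigh energy penalty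
`ℰ(T) = (α + βT)·Σ_{k=0}^{∞} e^{-k²T²/(2σ²)} − βσ√(π/2)` is convex on `(0, ∞)`. -/
theorem energy_penalty_rayleigh_convex (σ α β : ℝ) (hσ : 0 < σ) (hα : 0 ≤ α) (hβ : 0 ≤ β) :
    ConvexOn ℝ (Set.Ioi (0 : ℝ))
      (fun T : ℝ =>
        (α + β * T) * (∑' k : ℕ, Real.exp (-((k : ℝ) ^ 2 * T ^ 2) / (2 * σ ^ 2)))
          - β * σ * Real.sqrt (π / 2)) := by
  have hπ : (0:ℝ) < π := Real.pi_pos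
  have hπ3 : 3 < π := Real.pi_gt_three
  have hsqrt3pos : 0 < Real.sqrt 3 := Real.sqrt_pos.2 (by norm_num)
  have hsqrt3lt : Real.sqrt 3 < 2 := by
    have h4 : Real.sqrt 4 = 2 := by
      rw [show (4:ℝ) = 2 ^ 2 by norm_num, Real.sqrt_sq (by norm_num : (0:ℝ) ≤ 2)]
    have := Real.sqrt_lt_sqrt (by norm_num : (0:ℝ) ≤ 3) (by norm_num : (3:ℝ) < 4)
    rwa [h4] at this
  set K : ℝ := Real.sqrt (2 * π) with hK
  have hKpos : 0 < K := Real.sqrt_pos.2 (by positivity)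
  refine convexOn_Ioi_of_glue (a := Real.sqrt 3 * σ) (b := 2 * σ)
    (by positivity) (by nlinarith) ?_ ?_
  · -- small piece, via theta transform
    have hEq : Set.EqOn
        (fun T : ℝ => ((β / 2 * T + K * σ * α / 2 * T⁻¹
            + (α / 2 + K * σ * β / 2 + -(β * σ * Real.sqrt (π / 2))))
          + ∑' k : ℕ, ((K * σ * α) * T⁻¹ + K * σ * β) *
              Real.exp (-(2 * π ^ 2 * σ ^ 2 * ((k : ℝ) + 1) ^ 2 * T⁻¹ ^ 2))))
        (fun T : ℝ =>
          (α + β * T) * (∑' k : ℕ, Real.exp (-((k : ℝ) ^ 2 * T ^ 2) / (2 * σ ^ 2)))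
            - β * σ * Real.sqrt (π / 2)) (Ioo 0 (2 * σ)) := by
      intro T hT
      have hT0 : (0:ℝ) < T := hT.1
      simp only
      rw [theta_transform hσ hT0, tsum_mul_left]
      have hT1 : T * T⁻¹ = 1 := mul_inv_cancel₀ hT0.ne'
      set S : ℝ := ∑' k : ℕ, Real.exp (-(2 * π ^ 2 * σ ^ 2 * ((k : ℝ) + 1) ^ 2 * T⁻¹ ^ 2))
      have hgen : ∀ c : ℝ, (β / 2 * T + K * σ * α / 2 * T⁻¹ + (α / 2 + K * σ * β / 2 + -(β * σ * c)))
          + (K * σ * α * T⁻¹ + K * σ * β) * S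
          = (α + β * T) * (1 / 2 + K * σ * T⁻¹ * (1 / 2 + S)) - β * σ * c := by
        intro c
        field_simp
        ring
      exact hgen _
    refine ConvexOn.congr ?_ hEq
    refine ConvexOn.add (ConvexOn.add (ConvexOn.add ?_ ?_) (convexOn_const _ (convex_Ioo _ _))) ?_
    · have := (convexOn_id (convex_Ioo (0:ℝ) (2 * σ))).smul (by positivity : (0:ℝ) ≤ β / 2)
      simpa [smul_eq_mul] using this
    · have h := (convexOn_zpow (𝕜 := ℝ) (-1)).subset (Ioo_subset_Ioi_self) (convex_Ioo (0:ℝ) (2 * σ))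
      have := h.smul (by positivity : (0:ℝ) ≤ K * σ * α / 2)
      simpa [smul_eq_mul, zpow_neg_one] using this
    · refine convexOn_tsum (convex_Ioo _ _) (fun k => ?_) (fun x hx => ?_)
      · refine convexOn_small (by positivity) (by positivity) hσ ?_
        have h1 : (1:ℝ) ≤ ((k : ℝ) + 1) ^ 2 := by nlinarith [(Nat.cast_nonneg k : (0:ℝ) ≤ (k:ℝ))]
        have hp2 : (18:ℝ) ≤ 2 * π ^ 2 := by nlinarith
        nlinarith [mul_le_mul_of_nonneg_right hp2 (sq_nonneg σ),
          mul_le_mul_of_nonneg_left h1 (by positivity : (0:ℝ) ≤ 2 * π ^ 2 * σ ^ 2)]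
      · refine Summable.mul_left _ (summable_exp_aux
          (by have := hx.1; positivity : (0:ℝ) < 2 * π ^ 2 * σ ^ 2 * x⁻¹ ^ 2) _ (fun k => ?_))
        have hb : (0:ℝ) ≤ 2 * π ^ 2 * σ ^ 2 * x⁻¹ ^ 2 := by positivity
        have h2 : (k:ℝ) ^ 2 ≤ ((k:ℝ) + 1) ^ 2 := by nlinarith [(Nat.cast_nonneg k : (0:ℝ) ≤ (k:ℝ))]
        nlinarith [mul_le_mul_of_nonneg_left h2 hb]
  · -- large piece, direct series
    have ht₀ : (0:ℝ) < Real.sqrt 3 * σ := by positivity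
    have hEq : Set.EqOn
        (fun T : ℝ => (∑' k : ℕ, (α + β * T) * Real.exp (-((k : ℝ) ^ 2 / (2 * σ ^ 2) * T ^ 2)))
          + -(β * σ * Real.sqrt (π / 2)))
        (fun T : ℝ =>
          (α + β * T) * (∑' k : ℕ, Real.exp (-((k : ℝ) ^ 2 * T ^ 2) / (2 * σ ^ 2)))
            - β * σ * Real.sqrt (π / 2)) (Ici (Real.sqrt 3 * σ)) := by
      intro T hT
      simp only
      rw [tsum_mul_left, sub_eq_add_neg]
      congr 2
      exact tsum_congr fun k => by congr 1; ring
    refine ConvexOn.congr ?_ hEq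
    refine ConvexOn.add ?_ (convexOn_const _ (convex_Ici _))
    refine convexOn_tsum (convex_Ici _) (fun k => ?_) (fun x hx => ?_)
    · refine convexOn_large hα hβ (by positivity) ht₀ ?_
      rcases Nat.eq_zero_or_pos k with hk | hk
      · left; simp [hk]
      · right
        have heq : 2 * ((k:ℝ) ^ 2 / (2 * σ ^ 2)) * (Real.sqrt 3 * σ) ^ 2 = 3 * (k:ℝ) ^ 2 := by
          rw [mul_pow, Real.sq_sqrt (by norm_num : (0:ℝ) ≤ 3)]
          field_simp
        rw [heq]
        have : (1:ℝ) ≤ (k:ℝ) := by exact_mod_cast hk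
        nlinarith
    · have hx0 : (0:ℝ) < x := lt_of_lt_of_le ht₀ hx
      refine Summable.mul_left _ (summable_exp_aux
        (by positivity : (0:ℝ) < x ^ 2 / (2 * σ ^ 2)) _ (fun k => le_of_eq (by ring)))
end

section
/- Let σ > 0 and let 𝒯 be a random variable whose law is the Rayleigh distribution with scale σ (density (t/σ²) e^{-t²/(2σ²)} on [0,∞)). For every sampling interval T > 0 and offset δ > 0, the expected wait time under offset sampling satisfies E[δ + ⌈max(𝒯 − δ, 0)/T⌉·T − 𝒯] = δ + T · Σ_{k=0}^{∞} e^{-(kT + δ)²/(2σ²)} − σ√(π/2). -/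
open MeasureTheory Real

open Filter Set Topology
open scoped NNReal ENNReal


-- survival lemma
lemma rayleigh_survival (σ : ℝ) (hσ : 0 < σ) {a : ℝ} (ha : 0 ≤ a) :
    ∫ t in Set.Ioi a, t / σ ^ 2 * Real.exp (-t ^ 2 / (2 * σ ^ 2))
      = Real.exp (-a ^ 2 / (2 * σ ^ 2)) := by
  have hσ2 : (0:ℝ) < σ ^ 2 := by positivity
  have hderiv : ∀ x ∈ Set.Ici a,
      HasDerivAt (fun t : ℝ => -Real.exp (-t ^ 2 / (2 * σ ^ 2)))
        (x / σ ^ 2 * Real.exp (-x ^ 2 / (2 * σ ^ 2))) x := by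
    intro x _
    have h1 : HasDerivAt (fun t : ℝ => -t ^ 2 / (2 * σ ^ 2)) (-x / σ ^ 2) x := by
      have := ((hasDerivAt_pow 2 x).neg).div_const (2 * σ ^ 2)
      refine this.congr_deriv ?_
      field_simp
      ring
    have h2 := (Real.hasDerivAt_exp _).comp x h1
    refine h2.neg.congr_deriv ?_
    field_simp
  have hpos : ∀ x ∈ Set.Ioi a, 0 ≤ x / σ ^ 2 * Real.exp (-x ^ 2 / (2 * σ ^ 2)) := by
    intro x hx
    have hx0 : (0:ℝ) ≤ x := le_of_lt (lt_of_le_of_lt ha hx)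
    exact mul_nonneg (div_nonneg hx0 hσ2.le) (Real.exp_pos _).le
  have htend : Tendsto (fun t : ℝ => -Real.exp (-t ^ 2 / (2 * σ ^ 2))) atTop (𝓝 0) := by
    have h1 : Tendsto (fun t : ℝ => -t ^ 2 / (2 * σ ^ 2)) atTop atBot := by
      have h2 : Tendsto (fun t : ℝ => t ^ 2 / (2 * σ ^ 2)) atTop atTop :=
        (tendsto_pow_atTop (two_ne_zero)).atTop_div_const (by positivity)
      have := tendsto_neg_atTop_atBot.comp h2
      refine this.congr fun t => ?_
      simp [neg_div]
    have := (Real.tendsto_exp_atBot.comp h1).neg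
    simpa using this
  have := integral_Ioi_of_hasDerivAt_of_nonneg' hderiv hpos htend
  rw [this]
  ring

-- mean lemma
lemma rayleigh_mean (σ : ℝ) (hσ : 0 < σ) :
    ∫ t in Set.Ioi (0:ℝ), t * (t / σ ^ 2 * Real.exp (-t ^ 2 / (2 * σ ^ 2)))
      = σ * Real.sqrt (π / 2) := by
  have hσ2 : (0:ℝ) < σ ^ 2 := by positivity
  have hb : (0:ℝ) < 1 / (2 * σ ^ 2) := by positivity
  have hexp : ∀ t : ℝ, -(1 / (2 * σ ^ 2)) * t ^ 2 = -t ^ 2 / (2 * σ ^ 2) := fun t => by ring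
  have hint1 : IntegrableOn (fun x : ℝ => x * (x / σ ^ 2 * Real.exp (-x ^ 2 / (2 * σ ^ 2))))
      (Set.Ioi 0) := by
    have h := (integrableOn_rpow_mul_exp_neg_mul_sq hb (by norm_num : (-1:ℝ) < 2)).const_mul
      (1 / σ ^ 2)
    refine MeasureTheory.IntegrableOn.congr_fun h (fun x _ => ?_) measurableSet_Ioi
    rw [show x ^ (2:ℝ) = x ^ 2 from by
      rw [show (2:ℝ) = ((2:ℕ):ℝ) by norm_num, Real.rpow_natCast], hexp x]
    ring
  have hint2 : IntegrableOn (fun x : ℝ => Real.exp (-x ^ 2 / (2 * σ ^ 2))) (Set.Ioi 0) := by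
    have h := (integrable_exp_neg_mul_sq hb).integrableOn (s := Set.Ioi 0)
    refine MeasureTheory.IntegrableOn.congr_fun h (fun x _ => ?_) measurableSet_Ioi
    rw [hexp x]
  have hderiv : ∀ x ∈ Set.Ici (0:ℝ),
      HasDerivAt (fun t : ℝ => -t * Real.exp (-t ^ 2 / (2 * σ ^ 2)))
        (x * (x / σ ^ 2 * Real.exp (-x ^ 2 / (2 * σ ^ 2))) - Real.exp (-x ^ 2 / (2 * σ ^ 2))) x := by
    intro x _
    have h1 : HasDerivAt (fun t : ℝ => -t ^ 2 / (2 * σ ^ 2)) (-x / σ ^ 2) x := by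
      have := ((hasDerivAt_pow 2 x).neg).div_const (2 * σ ^ 2)
      refine this.congr_deriv ?_
      field_simp
      ring
    have h2 := (Real.hasDerivAt_exp _).comp x h1
    have h3 := ((hasDerivAt_id x).neg).mul h2
    refine h3.congr_deriv ?_
    simp only [Function.comp_apply, Pi.neg_apply, id]
    field_simp
    ring
  have htend : Tendsto (fun t : ℝ => -t * Real.exp (-t ^ 2 / (2 * σ ^ 2))) atTop (𝓝 0) := by
    have hhalf : Tendsto (fun x : ℝ => Real.exp (-(1/2) * x)) atTop (𝓝 0) := by
      have := tendsto_exp_neg_atTop_nhds_zero.comp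
        (Tendsto.const_mul_atTop (by norm_num : (0:ℝ) < 1/2) tendsto_id)
      refine this.congr fun x => ?_
      simp [neg_mul]
    have h := (rpow_mul_exp_neg_mul_sq_isLittleO_exp_neg hb 1).isBigO.trans_tendsto hhalf
    have := h.neg
    rw [neg_zero] at this
    refine this.congr fun x => ?_
    rw [Real.rpow_one, hexp x]
    ring
  have key := integral_Ioi_of_hasDerivAt_of_tendsto' hderiv (hint1.sub hint2) htend
  rw [integral_sub hint1 hint2] at key
  simp only [neg_zero, zero_mul, sub_zero] at key
  rw [sub_eq_zero] at key
  rw [key]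
  have : ∫ x in Set.Ioi (0:ℝ), Real.exp (-x ^ 2 / (2 * σ ^ 2))
      = ∫ x in Set.Ioi (0:ℝ), Real.exp (-(1 / (2 * σ ^ 2)) * x ^ 2) := by
    refine setIntegral_congr_fun measurableSet_Ioi fun x _ => ?_
    rw [hexp x]
  rw [this, integral_gaussian_Ioi]
  rw [show π / (1 / (2 * σ ^ 2)) = (2 * σ) ^ 2 * (π / 2) by field_simp]
  rw [Real.sqrt_mul (by positivity), Real.sqrt_sq (by positivity)]
  ring

-- ceiling as a tsum of indicators
lemma ceil_eq_tsum {y : ℝ} (hy : 0 ≤ y) :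
    ((⌈y⌉ : ℤ) : ℝ) = ∑' k : ℕ, (if (k : ℝ) < y then (1:ℝ) else 0) := by
  have hn : (0:ℤ) ≤ ⌈y⌉ := Int.ceil_nonneg hy
  have key : ∀ k : ℕ, ((k : ℝ) < y ↔ k < ⌈y⌉.toNat) := by
    intro k
    rw [Int.lt_toNat]
    constructor
    · intro h
      rw [Int.lt_ceil]
      push_cast
      exact h
    · intro h
      rw [Int.lt_ceil] at h
      push_cast at h
      exact h
  rw [tsum_eq_sum (s := Finset.range ⌈y⌉.toNat)
    (fun k hk => if_neg (fun h => hk (Finset.mem_range.mpr ((key k).mp h))))]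
  rw [Finset.sum_congr rfl (fun k hk => if_pos ((key k).mpr (Finset.mem_range.mp hk)))]
  rw [Finset.sum_const, Finset.card_range, nsmul_eq_mul, mul_one, ← Int.toNat_of_nonneg hn]
  push_cast
  rfl


/-- The Rayleigh measure with scale `σ`, given by the density
`t ↦ (t/σ²)·e^{-t²/(2σ²)}` on `[0, ∞)` with respect to the Lebesgue measure. -/
noncomputable def rayleighMeasure (σ : ℝ) : Measure ℝ :=
  MeasureTheory.volume.withDensity
    (fun t => ENNReal.ofReal (if 0 ≤ t then t / σ ^ 2 * Real.exp (-t ^ 2 / (2 * σ ^ 2)) else 0))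

/-- For a Rayleigh distributed time to event with scale `σ > 0`, sampling interval `T > 0`
and offset `δ > 0`, the expected wait under offset sampling equals
`δ + T·Σ_{k=0}^{∞} e^{-(kT + δ)²/(2σ²)} − σ·√(π/2)`. -/
theorem expected_wait_offset_rayleigh (σ T δ : ℝ) (hσ : 0 < σ) (hT : 0 < T) (hδ : 0 < δ) :
    ∫ t, (δ + ((⌈max (t - δ) 0 / T⌉ : ℤ) : ℝ) * T - t) ∂(rayleighMeasure σ)
      = δ + T * (∑' k : ℕ, Real.exp (-((k : ℝ) * T + δ) ^ 2 / (2 * σ ^ 2)))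
          - σ * Real.sqrt (π / 2) := by
  have hσ2 : (0:ℝ) < σ ^ 2 := by positivity
  have hb : (0:ℝ) < 1 / (2 * σ ^ 2) := by positivity
  have hexp : ∀ t : ℝ, -(1 / (2 * σ ^ 2)) * t ^ 2 = -t ^ 2 / (2 * σ ^ 2) := fun t => by ring
  set ρ : ℝ → ℝ := fun t => t / σ ^ 2 * Real.exp (-t ^ 2 / (2 * σ ^ 2)) with hρdef
  set g : ℝ → ℝ := fun t => if 0 ≤ t then ρ t else 0 with hgdef
  have hρc : Continuous ρ := by
    rw [hρdef]; fun_prop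
  have hgm : Measurable g := by
    exact Measurable.ite measurableSet_Ici hρc.measurable measurable_const
  have hgnn : ∀ t, 0 ≤ g t := by
    intro t
    rw [hgdef]
    dsimp only
    split
    · exact mul_nonneg (div_nonneg (by assumption) hσ2.le) (Real.exp_pos _).le
    · exact le_refl 0
  have hgind : g = Set.indicator (Set.Ici 0) ρ := by
    funext t; simp [hgdef, Set.indicator_apply, Set.mem_Ici]
  -- step 1: withDensity
  have hint : ∫ t, (δ + ((⌈max (t - δ) 0 / T⌉ : ℤ) : ℝ) * T - t) ∂(rayleighMeasure σ)
      = ∫ t, g t * (δ + ((⌈max (t - δ) 0 / T⌉ : ℤ) : ℝ) * T - t) := by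
    have h0 : rayleighMeasure σ
        = MeasureTheory.volume.withDensity (fun t => ((Real.toNNReal (g t) : ℝ≥0) : ℝ≥0∞)) := rfl
    rw [h0, integral_withDensity_eq_integral_smul hgm.real_toNNReal]
    congr 1
    funext t
    rw [NNReal.smul_def, Real.coe_toNNReal', max_eq_left (hgnn t), smul_eq_mul]
  -- integrability facts
  have hρInt : Integrable ρ := by
    have h := (integrable_mul_exp_neg_mul_sq hb).const_mul (1 / σ ^ 2)
    have heq : (fun t : ℝ => 1 / σ ^ 2 * (t * Real.exp (-(1 / (2 * σ ^ 2)) * t ^ 2))) = ρ := by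
      funext t; rw [hρdef]; dsimp only; rw [hexp t]; ring
    exact heq ▸ h
  have hgInt : Integrable g := by
    rw [hgind]; exact hρInt.indicator measurableSet_Ici
  have htρInt : Integrable (fun t => t * ρ t) := by
    have h := (integrable_rpow_mul_exp_neg_mul_sq hb (by norm_num : (-1:ℝ) < 2)).const_mul
      (1 / σ ^ 2)
    have heq : (fun t : ℝ => 1 / σ ^ 2 * (t ^ (2:ℝ) * Real.exp (-(1 / (2 * σ ^ 2)) * t ^ 2)))
        = fun t => t * ρ t := by
      funext t
      rw [show t ^ (2:ℝ) = t ^ 2 from by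
        rw [show (2:ℝ) = ((2:ℕ):ℝ) by norm_num, Real.rpow_natCast], hexp t, hρdef]
      dsimp only
      ring
    exact heq ▸ h
  have htgInt : Integrable (fun t => t * g t) := by
    have heq : (fun t => t * g t) = Set.indicator (Set.Ici 0) (fun t => t * ρ t) := by
      funext t
      rw [hgdef]
      by_cases ht : 0 ≤ t <;> simp [Set.indicator_apply, Set.mem_Ici, ht]
    rw [heq]
    exact htρInt.indicator measurableSet_Ici
  -- ∫ g = 1
  have hg1 : ∫ t, g t = 1 := by
    rw [hgind, integral_indicator measurableSet_Ici, MeasureTheory.integral_Ici_eq_integral_Ioi,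
      rayleigh_survival σ hσ le_rfl]
    norm_num
  -- ∫ t * g t = σ √(π/2)
  have hmean : ∫ t, t * g t = σ * Real.sqrt (π / 2) := by
    have heq : (fun t => t * g t) = Set.indicator (Set.Ici 0) (fun t => t * ρ t) := by
      funext t
      rw [hgdef]
      by_cases ht : 0 ≤ t <;> simp [Set.indicator_apply, Set.mem_Ici, ht]
    rw [heq, integral_indicator measurableSet_Ici, MeasureTheory.integral_Ici_eq_integral_Ioi,
      rayleigh_mean σ hσ]
  -- the ceiling function
  have hcm : Measurable (fun t : ℝ => ((⌈max (t - δ) 0 / T⌉ : ℤ) : ℝ)) := by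
    exact Measurable.of_discrete.comp (((measurable_id.sub_const δ).max measurable_const).div_const T).ceil
  have hcnn : ∀ t : ℝ, 0 ≤ ((⌈max (t - δ) 0 / T⌉ : ℤ) : ℝ) := by
    intro t
    have : (0:ℤ) ≤ ⌈max (t - δ) 0 / T⌉ :=
      Int.ceil_nonneg (div_nonneg (le_max_right _ _) hT.le)
    exact_mod_cast this
  have hcle : ∀ t : ℝ, 0 ≤ t → ((⌈max (t - δ) 0 / T⌉ : ℤ) : ℝ) * T ≤ t + T := by
    intro t ht
    have h1 : ((⌈max (t - δ) 0 / T⌉ : ℤ) : ℝ) < max (t - δ) 0 / T + 1 := Int.ceil_lt_add_one _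
    have h2 : max (t - δ) 0 ≤ t := max_le (by linarith) ht
    have h3 : max (t - δ) 0 / T * T = max (t - δ) 0 := div_mul_cancel₀ _ hT.ne'
    nlinarith [hcnn t]
  have hc2Int : Integrable (fun t => ((⌈max (t - δ) 0 / T⌉ : ℤ) : ℝ) * T * g t) := by
    have hbInt : Integrable (fun t => t * g t + T * g t) := htgInt.add (hgInt.const_mul T)
    refine Integrable.mono' hbInt
      (((hcm.mul_const T).mul hgm).aestronglyMeasurable) (Filter.Eventually.of_forall fun t => ?_)
    by_cases ht : 0 ≤ t
    · rw [Real.norm_eq_abs,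
        abs_of_nonneg (mul_nonneg (mul_nonneg (hcnn t) hT.le) (hgnn t))]
      have h := hcle t ht
      nlinarith [mul_nonneg (sub_nonneg.mpr h) (hgnn t)]
    · have hg0 : g t = 0 := by rw [hgdef]; exact if_neg ht
      simp [hg0]
  have hInt1 : Integrable (fun t => (δ - t) * g t) := by
    have h := (hgInt.const_mul δ).sub htgInt
    have heq : (fun t => δ * g t - t * g t) = fun t => (δ - t) * g t := by
      funext t; ring
    exact heq ▸ h
  -- split
  rw [hint]
  have hsplit : (fun t => g t * (δ + ((⌈max (t - δ) 0 / T⌉ : ℤ) : ℝ) * T - t))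
      = fun t => (δ - t) * g t + ((⌈max (t - δ) 0 / T⌉ : ℤ) : ℝ) * T * g t := by
    funext t; ring
  rw [hsplit, integral_add hInt1 hc2Int]
  -- first piece
  have e1 : ∫ t, (δ - t) * g t = δ - σ * Real.sqrt (π / 2) := by
    have heq : (fun t => (δ - t) * g t) = fun t => δ * g t - t * g t := by
      funext t; ring
    rw [heq, integral_sub (hgInt.const_mul δ) htgInt, integral_const_mul, hg1, hmean]
    ring
  -- second piece
  have e2 : ∫ t, ((⌈max (t - δ) 0 / T⌉ : ℤ) : ℝ) * T * g t
      = T * ∑' k : ℕ, Real.exp (-((k : ℝ) * T + δ) ^ 2 / (2 * σ ^ 2)) := by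
    set F : ℕ → ℝ → ℝ := fun k t => (if (k : ℝ) * T + δ < t then (1:ℝ) else 0) * (T * g t)
      with hF
    have hFind : ∀ k, F k = fun t =>
        Set.indicator (Set.Ioi ((k : ℝ) * T + δ)) (fun t => T * g t) t := by
      intro k; funext t
      rw [hF]
      simp only [Set.indicator_apply, Set.mem_Ioi]
      split <;> simp
    have hFint : ∀ k, Integrable (F k) := by
      intro k; rw [hFind k]; exact (hgInt.const_mul T).indicator measurableSet_Ioi
    have hsurv : ∀ k : ℕ, ∫ t, F k t = T * Real.exp (-((k : ℝ) * T + δ) ^ 2 / (2 * σ ^ 2)) := by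
      intro k
      rw [hFind k, integral_indicator measurableSet_Ioi]
      have hpos : (0:ℝ) < (k : ℝ) * T + δ := by positivity
      have heqset : Set.EqOn (fun t => T * g t) (fun t => T * ρ t)
          (Set.Ioi ((k : ℝ) * T + δ)) := by
        intro t ht
        have ht0 : (0:ℝ) ≤ t := le_of_lt (lt_trans hpos ht)
        rw [hgdef]
        dsimp only
        rw [if_pos ht0]
      rw [setIntegral_congr_fun measurableSet_Ioi heqset, integral_const_mul,
        rayleigh_survival σ hσ hpos.le]
    have hnorm : ∀ k : ℕ, ∫ t, ‖F k t‖
        = T * Real.exp (-((k : ℝ) * T + δ) ^ 2 / (2 * σ ^ 2)) := by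
      intro k
      rw [← hsurv k]
      congr 1
      funext t
      rw [Real.norm_eq_abs, abs_of_nonneg]
      refine mul_nonneg ?_ (mul_nonneg hT.le (hgnn t))
      split <;> norm_num
    have hsummable : Summable (fun k : ℕ => Real.exp (-((k : ℝ) * T + δ) ^ 2 / (2 * σ ^ 2))) := by
      refine Summable.of_nonneg_of_le (fun k => (Real.exp_pos _).le) (fun k => ?_)
        (summable_geometric_of_lt_one (Real.exp_pos (-(T * δ / σ ^ 2))).le
          (Real.exp_lt_one_iff.mpr (neg_lt_zero.mpr (by positivity))))
      rw [← Real.exp_nat_mul]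
      apply Real.exp_le_exp.mpr
      have hk : (0:ℝ) ≤ (k:ℝ) := Nat.cast_nonneg k
      have h1 : (k:ℝ) * (2 * T * δ) ≤ ((k : ℝ) * T + δ) ^ 2 := by nlinarith [sq_nonneg ((k:ℝ) * T), sq_nonneg δ]
      have h2 : (k:ℝ) * (2 * T * δ) / (2 * σ ^ 2) ≤ ((k : ℝ) * T + δ) ^ 2 / (2 * σ ^ 2) :=
        div_le_div_of_nonneg_right h1 (by positivity)
      have h3 : (k:ℝ) * (2 * T * δ) / (2 * σ ^ 2) = (k:ℝ) * (T * δ / σ ^ 2) := by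
        field_simp
      rw [neg_div, mul_neg]
      rw [h3] at h2
      exact neg_le_neg h2
    have hpt : (fun t => ((⌈max (t - δ) 0 / T⌉ : ℤ) : ℝ) * T * g t)
        = fun t => ∑' k : ℕ, F k t := by
      funext t
      have hy : 0 ≤ max (t - δ) 0 / T := div_nonneg (le_max_right _ _) hT.le
      rw [ceil_eq_tsum hy, mul_assoc, ← tsum_mul_right]
      refine tsum_congr fun k => ?_
      rw [hF]
      dsimp only
      have hiff : ((k : ℝ) < max (t - δ) 0 / T) ↔ ((k : ℝ) * T + δ < t) := by
        rw [lt_div_iff₀ hT, lt_max_iff]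
        constructor
        · rintro (h | h)
          · linarith
          · exfalso
            have := mul_nonneg (Nat.cast_nonneg (α := ℝ) k) hT.le
            linarith
        · intro h; left; linarith
      rw [if_congr hiff rfl rfl]
    have hnsum : Summable fun k : ℕ => ∫ t, ‖F k t‖ := by
      have : (fun k : ℕ => ∫ t, ‖F k t‖)
          = fun k : ℕ => T * Real.exp (-((k : ℝ) * T + δ) ^ 2 / (2 * σ ^ 2)) := funext hnorm
      rw [this]
      exact hsummable.mul_left T
    rw [hpt, ← integral_tsum_of_summable_integral_norm hFint hnsum]
    rw [show (fun k : ℕ => ∫ t, F k t)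
        = fun k : ℕ => T * Real.exp (-((k : ℝ) * T + δ) ^ 2 / (2 * σ ^ 2)) from funext hsurv]
    rw [tsum_mul_left]
  rw [e1, e2]
  ring
end
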